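/- arXiv:2010.10179 — 3 statements merged into one kernel-verified Lean document; each statement's English description precedes it below -/
import Mathlib

section
/- There is a universal constant $C$ such that for all $l \in \mathbb{R}$ and all $z, w \in \mathbb{C}$, the kernel $K_l(z,w) = G(z,w) F(z + \bar{w} + 2l)$ satisfies $|K_l(z,w)| \le C \frac{e^{-|\operatorname{Re}(z-w)|^2/2}}{1 + |\operatorname{Im}(z-w)|}$, where $G$ is the Ginibre kernel and $F(z) = \frac{1}{\sqrt{2\pi}}\int_{-\infty}^0 e^{-(z-t)^2/2}\,dt$. -/
open MeasureTheory Complex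

/-- The Ginibre kernel. -/
noncomputable def Ginibre (z w : ℂ) : ℂ :=
  Complex.exp (z * (starRingEnd ℂ) w - (‖z‖ ^ 2 : ℝ) / 2 - (‖w‖ ^ 2 : ℝ) / 2)

/-- The entire erfc-type function `F(z) = (2π)^{-1/2} ∫_{-∞}^0 e^{-(z-t)²/2} dt`. -/
noncomputable def erfcF (z : ℂ) : ℂ :=
  (Real.sqrt (2 * Real.pi) : ℂ)⁻¹ *
    ∫ t in Set.Iio (0 : ℝ), Complex.exp (-(z - (t : ℂ)) ^ 2 / 2)

/-- The erfc-kernel `K_l(z,w) = G(z,w) F(z + w̄ + 2l)`. -/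
noncomputable def erfcKernel (l : ℝ) (z w : ℂ) : ℂ :=
  Ginibre z w * erfcF (z + (starRingEnd ℂ) w + 2 * l)

/-!
Write `c = a + ib` and `J(c) = ∫_{-∞}^0 e^{-(c-t)²/2} dt`, so that `erfcF c = J(c) / √(2π)`.
Since `|e^{-(c-t)²/2}| = e^{b²/2} e^{-(a-t)²/2}`, comparison with a Gaussian gives
`|J(c)| ≤ 4 e^{b²/2}`. For decay in `b`, split `c - t = ib + (a - t)`: the integral of
`(c - t) e^{-(c-t)²/2}` over `(-∞, 0)` is the boundary value `e^{-c²/2}`, and the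
`(a - t)` part is again dominated by a Gaussian, so `|b| |J(c)| ≤ 5 e^{b²/2}`.
With `c = z + w̄ + 2l` we have `b = Im(z - w)`, and the factor `e^{b²/2}` is cancelled by
`|G(z,w)| = e^{-|z-w|²/2}`.
-/

open Set Filter Topology

lemma exp_neg_sq_div_four_eq (a : ℝ) :
    (fun t : ℝ => Real.exp (-(a - t) ^ 2 / 4)) = fun t => Real.exp (-4⁻¹ * (a - t) ^ 2) := by
  ext t; ring_nf

lemma integrable_exp_neg_sq_div_four (a : ℝ) :
    Integrable fun t : ℝ => Real.exp (-(a - t) ^ 2 / 4) := by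
  rw [exp_neg_sq_div_four_eq]
  exact (integrable_exp_neg_mul_sq (by norm_num : (0 : ℝ) < 4⁻¹)).comp_sub_left a

lemma integral_exp_neg_sq_div_four_le (a : ℝ) (s : Set ℝ) :
    ∫ t in s, Real.exp (-(a - t) ^ 2 / 4) ≤ 4 := by
  calc ∫ t in s, Real.exp (-(a - t) ^ 2 / 4)
      ≤ ∫ t, Real.exp (-(a - t) ^ 2 / 4) := setIntegral_le_integral
        (integrable_exp_neg_sq_div_four a) (ae_of_all _ fun t => (Real.exp_pos _).le)
    _ = ∫ t, Real.exp (-4⁻¹ * t ^ 2) := by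
        rw [exp_neg_sq_div_four_eq]
        exact integral_sub_left_eq_self (fun t => Real.exp (-4⁻¹ * t ^ 2)) volume a
    _ = Real.sqrt (Real.pi / 4⁻¹) := integral_gaussian _
    _ ≤ Real.sqrt (4 ^ 2) :=
        Real.sqrt_le_sqrt (by rw [div_inv_eq_mul]; linarith [Real.pi_le_four])
    _ = 4 := Real.sqrt_sq (by norm_num)

section GaussianDomination

variable {F : Type*} [NormedAddCommGroup F] {f : ℝ → F} {a E : ℝ}

lemma integrable_of_norm_le_exp_neg_sq_div_four (hf : Continuous f)
    (h : ∀ t, ‖f t‖ ≤ E * Real.exp (-(a - t) ^ 2 / 4)) : Integrable f :=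
  ((integrable_exp_neg_sq_div_four a).const_mul E).mono' hf.aestronglyMeasurable
    (ae_of_all _ h)

lemma norm_setIntegral_le_of_norm_le_exp_neg_sq_div_four [NormedSpace ℝ F] (s : Set ℝ)
    (h : ∀ t, ‖f t‖ ≤ E * Real.exp (-(a - t) ^ 2 / 4)) :
    ‖∫ t in s, f t‖ ≤ 4 * E := by
  have hE : 0 ≤ E := nonneg_of_mul_nonneg_left ((norm_nonneg _).trans (h 0)) (Real.exp_pos _)
  calc ‖∫ t in s, f t‖ ≤ ∫ t in s, E * Real.exp (-(a - t) ^ 2 / 4) :=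
        norm_integral_le_of_norm_le ((integrable_exp_neg_sq_div_four a).const_mul E).integrableOn
          (ae_of_all _ h)
    _ = E * ∫ t in s, Real.exp (-(a - t) ^ 2 / 4) := integral_const_mul _ _
    _ ≤ 4 * E := by
        rw [mul_comm 4]
        exact mul_le_mul_of_nonneg_left (integral_exp_neg_sq_div_four_le a s) hE

end GaussianDomination

lemma abs_mul_exp_neg_sq_div_two_le (s : ℝ) :
    |s| * Real.exp (-s ^ 2 / 2) ≤ Real.exp (-s ^ 2 / 4) := by
  have habs : |s| ≤ Real.exp (s ^ 2 / 4) := by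
    nlinarith [sq_nonneg (|s| - 2), sq_abs s, Real.add_one_le_exp (s ^ 2 / 4)]
  calc |s| * Real.exp (-s ^ 2 / 2) ≤ Real.exp (s ^ 2 / 4) * Real.exp (-s ^ 2 / 2) :=
        mul_le_mul_of_nonneg_right habs (Real.exp_pos _).le
    _ = Real.exp (-s ^ 2 / 4) := by rw [← Real.exp_add]; ring_nf

noncomputable def erfcIntegrand (c : ℂ) (t : ℝ) : ℂ := Complex.exp (-(c - t) ^ 2 / 2)

section erfcIntegrand

variable (c : ℂ)

lemma norm_erfcIntegrand (t : ℝ) :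
    ‖erfcIntegrand c t‖ = Real.exp (c.im ^ 2 / 2) * Real.exp (-(c.re - t) ^ 2 / 2) := by
  rw [erfcIntegrand, Complex.norm_exp, ← Real.exp_add]
  congr 1
  simp only [Complex.div_ofNat_re, Complex.neg_re, sq, Complex.mul_re, Complex.sub_re,
    Complex.sub_im, Complex.ofReal_re, Complex.ofReal_im]
  ring

lemma norm_erfcIntegrand_le (t : ℝ) :
    ‖erfcIntegrand c t‖ ≤ Real.exp (c.im ^ 2 / 2) * Real.exp (-(c.re - t) ^ 2 / 4) := by
  rw [norm_erfcIntegrand]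
  exact mul_le_mul_of_nonneg_left (Real.exp_le_exp.2 (by nlinarith [sq_nonneg (c.re - t)]))
    (Real.exp_pos _).le

lemma norm_re_sub_mul_erfcIntegrand_le (t : ℝ) :
    ‖((c.re - t : ℝ) : ℂ) * erfcIntegrand c t‖ ≤
      Real.exp (c.im ^ 2 / 2) * Real.exp (-(c.re - t) ^ 2 / 4) := by
  rw [norm_mul, norm_erfcIntegrand, Complex.norm_real, Real.norm_eq_abs, mul_left_comm]
  gcongr
  exact abs_mul_exp_neg_sq_div_two_le _

lemma continuous_erfcIntegrand : Continuous (erfcIntegrand c) := by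
  unfold erfcIntegrand; fun_prop

lemma hasDerivAt_erfcIntegrand (x : ℝ) :
    HasDerivAt (erfcIntegrand c) ((c - x) * erfcIntegrand c x) x := by
  have h := ((((hasDerivAt_id (x : ℂ)).const_sub c).pow 2).neg.div_const 2).cexp.comp_ofReal
  exact h.congr_deriv (by simp only [erfcIntegrand, id, Pi.pow_apply, Pi.neg_apply]; ring)

lemma tendsto_erfcIntegrand_atBot : Tendsto (erfcIntegrand c) atBot (𝓝 0) := by
  rw [tendsto_zero_iff_norm_tendsto_zero]
  simp_rw [norm_erfcIntegrand]
  rw [← mul_zero (Real.exp (c.im ^ 2 / 2))]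
  refine tendsto_const_nhds.mul (Real.tendsto_exp_atBot.comp ?_)
  have hsub : Tendsto (fun t : ℝ => c.re - t) atBot atTop :=
    tendsto_atTop_add_const_left _ c.re tendsto_neg_atBot_atTop
  exact (tendsto_neg_atTop_atBot.comp ((tendsto_pow_atTop two_ne_zero).comp hsub)).atBot_div_const
    two_pos

lemma integrable_erfcIntegrand : Integrable (erfcIntegrand c) :=
  integrable_of_norm_le_exp_neg_sq_div_four (continuous_erfcIntegrand c) (norm_erfcIntegrand_le c)

lemma integrable_re_sub_mul_erfcIntegrand :
    Integrable fun t : ℝ => ((c.re - t : ℝ) : ℂ) * erfcIntegrand c t :=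
  integrable_of_norm_le_exp_neg_sq_div_four
    ((continuous_ofReal.comp (continuous_sub_left c.re)).mul (continuous_erfcIntegrand c))
    (norm_re_sub_mul_erfcIntegrand_le c)

lemma sub_mul_erfcIntegrand (t : ℝ) :
    (c - t) * erfcIntegrand c t =
      I * c.im * erfcIntegrand c t + ((c.re - t : ℝ) : ℂ) * erfcIntegrand c t := by
  push_cast
  linear_combination -erfcIntegrand c t * re_add_im c

lemma integral_Iio_sub_mul_erfcIntegrand :
    ∫ t in Iio 0, (c - t) * erfcIntegrand c t = erfcIntegrand c 0 := by
  rw [← integral_Iic_eq_integral_Iio, integral_Iic_of_hasDerivAt_of_tendsto'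
    (fun x _ => hasDerivAt_erfcIntegrand c x) ?_ (tendsto_erfcIntegrand_atBot c), sub_zero]
  simp_rw [sub_mul_erfcIntegrand]
  exact (((integrable_erfcIntegrand c).const_mul _).add
    (integrable_re_sub_mul_erfcIntegrand c)).integrableOn

lemma I_mul_im_mul_integral_erfcIntegrand :
    I * c.im * ∫ t in Iio 0, erfcIntegrand c t =
      erfcIntegrand c 0 - ∫ t in Iio 0, ((c.re - t : ℝ) : ℂ) * erfcIntegrand c t := by
  rw [← integral_Iio_sub_mul_erfcIntegrand, eq_sub_iff_add_eq, ← integral_const_mul,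
    ← integral_add ((integrable_erfcIntegrand c).const_mul _).integrableOn
      (integrable_re_sub_mul_erfcIntegrand c).integrableOn]
  simp_rw [sub_mul_erfcIntegrand]

lemma one_add_abs_im_mul_norm_integral_erfcIntegrand_le :
    (1 + |c.im|) * ‖∫ t in Iio 0, erfcIntegrand c t‖ ≤ 9 * Real.exp (c.im ^ 2 / 2) := by
  have hJ := norm_setIntegral_le_of_norm_le_exp_neg_sq_div_four (Iio 0) (norm_erfcIntegrand_le c)
  have hR := norm_setIntegral_le_of_norm_le_exp_neg_sq_div_four (Iio 0)
    (norm_re_sub_mul_erfcIntegrand_le c)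
  have h0 : ‖erfcIntegrand c 0‖ ≤ Real.exp (c.im ^ 2 / 2) := by
    rw [norm_erfcIntegrand]
    exact mul_le_of_le_one_right (Real.exp_pos _).le
      (Real.exp_le_one_iff.2 (by nlinarith [sq_nonneg c.re]))
  have hIm : |c.im| * ‖∫ t in Iio 0, erfcIntegrand c t‖ ≤ 5 * Real.exp (c.im ^ 2 / 2) :=
    calc |c.im| * ‖∫ t in Iio 0, erfcIntegrand c t‖
        = ‖I * c.im * ∫ t in Iio 0, erfcIntegrand c t‖ := by
          rw [norm_mul, norm_mul, norm_I, one_mul, norm_real, Real.norm_eq_abs]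
      _ ≤ ‖erfcIntegrand c 0‖ +
            ‖∫ t in Iio 0, ((c.re - t : ℝ) : ℂ) * erfcIntegrand c t‖ := by
          rw [I_mul_im_mul_integral_erfcIntegrand]
          exact norm_sub_le _ _
      _ ≤ 5 * Real.exp (c.im ^ 2 / 2) := by linarith
  linarith

end erfcIntegrand

lemma norm_Ginibre (z w : ℂ) :
    ‖Ginibre z w‖ = Real.exp (-(z - w).re ^ 2 / 2) * Real.exp (-(z - w).im ^ 2 / 2) := by
  rw [Ginibre, Complex.norm_exp, ← Real.exp_add]
  congr 1
  simp only [Complex.sq_norm, Complex.normSq_apply, Complex.sub_re, Complex.sub_im,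
    Complex.mul_re, Complex.conj_re, Complex.conj_im, Complex.div_ofNat_re, Complex.ofReal_re]
  ring

lemma norm_erfcF (c : ℂ) :
    ‖erfcF c‖ = (Real.sqrt (2 * Real.pi))⁻¹ * ‖∫ t in Iio 0, erfcIntegrand c t‖ := by
  rw [erfcF, norm_mul, norm_inv, norm_real, Real.norm_of_nonneg (Real.sqrt_nonneg _)]
  rfl

/-- Uniform off-diagonal decay of the erfc-kernels:
`|K_l(z,w)| ≤ C e^{-(Re(z-w))²/2} / (1 + |Im(z-w)|)`. -/
theorem erfcKernel_decay :
    ∃ C > (0 : ℝ), ∀ (l : ℝ) (z w : ℂ),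
      ‖erfcKernel l z w‖ ≤
        C * Real.exp (-(z - w).re ^ 2 / 2) / (1 + |(z - w).im|) := by
  refine ⟨(Real.sqrt (2 * Real.pi))⁻¹ * 9, by positivity, fun l z w => ?_⟩
  set c := z + (starRingEnd ℂ) w + 2 * l
  have him : c.im = (z - w).im := by simp [c, sub_eq_add_neg]
  have hJ := one_add_abs_im_mul_norm_integral_erfcIntegrand_le c
  rw [him] at hJ
  rw [le_div_iff₀ (by positivity), erfcKernel, norm_mul, norm_Ginibre, norm_erfcF]
  set b := (z - w).im
  calc _ = (Real.sqrt (2 * Real.pi))⁻¹ * Real.exp (-(z - w).re ^ 2 / 2) *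
        (Real.exp (-b ^ 2 / 2) * ((1 + |b|) * ‖∫ t in Iio 0, erfcIntegrand c t‖)) := by ring
    _ ≤ (Real.sqrt (2 * Real.pi))⁻¹ * Real.exp (-(z - w).re ^ 2 / 2) *
        (Real.exp (-b ^ 2 / 2) * (9 * Real.exp (b ^ 2 / 2))) := by gcongr
    _ = _ := by
        have hcancel : Real.exp (-b ^ 2 / 2) * Real.exp (b ^ 2 / 2) = 1 := by
          rw [← Real.exp_add, neg_div, neg_add_cancel, Real.exp_zero]
        linear_combination
          (Real.sqrt (2 * Real.pi))⁻¹ * 9 * Real.exp (-(z - w).re ^ 2 / 2) * hcancel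
end

section
/- Let $E \subset \mathbb{C}$ be a bounded measurable set with finite perimeter, and let $G(z,w) = e^{z\bar{w}-|z|^2/2-|w|^2/2}$ be the Ginibre kernel. Then there is a universal constant $C$ such that $\int_E \int_{\mathbb{C}\setminus E} |G(z,w)|^2\,dA(z)\,dA(w) \le C \cdot \operatorname{perim} E$. -/
open MeasureTheory

/-- `dA`: Lebesgue measure on `ℂ` divided by `π`. -/
noncomputable def dA : Measure ℂ := (ENNReal.ofReal Real.pi)⁻¹ • (volume : Measure ℂ)

/-- Admissible perimeter bounds for `E` (translation characterization of BV). -/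
def perimBounds (E : Set ℂ) : Set ℝ :=
  {P : ℝ | 0 ≤ P ∧ ∀ h : ℂ,
    ∫ z, |Set.indicator E (fun _ => (1 : ℝ)) (z + h) -
          Set.indicator E (fun _ => (1 : ℝ)) z| ∂dA ≤ P * ‖h‖}

/-- `E` has finite perimeter. -/
def HasFinitePerim (E : Set ℂ) : Prop := (perimBounds E).Nonempty

/-- The perimeter of `E` (total variation of `1_E`). -/
noncomputable def perim (E : Set ℂ) : ℝ := sInf (perimBounds E)

/-!
Since `|G(z,w)|² = e^{-|z-w|²}`, substituting `z = w + u` and applying Tonelli turns the double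
integral into `∫ e^{-|u|²} |E ∩ (Eᶜ - u)| dA(u)`. On the overlap `E ∩ (Eᶜ - u)` the functions
`1_E(· + u)` and `1_E` differ, so its area is at most `perim E · |u|`, and
`∫ |u| e^{-|u|²} dA(u) ≤ ∫ e^{-|u|²/2} dA(u) = 2`.
-/

open scoped ENNReal

theorem ofReal_integral_le_lintegral_ofReal {α : Type*} [MeasurableSpace α] {μ : Measure α}
    {f : α → ℝ} (hf : 0 ≤ᵐ[μ] f) :
    ENNReal.ofReal (∫ x, f x ∂μ) ≤ ∫⁻ x, ENNReal.ofReal (f x) ∂μ :=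
  calc ENNReal.ofReal (∫ x, f x ∂μ) = ‖∫ x, f x ∂μ‖ₑ :=
        (Real.enorm_of_nonneg (integral_nonneg_of_ae hf)).symm
    _ ≤ ∫⁻ x, ‖f x‖ₑ ∂μ := enorm_integral_le_lintegral_enorm f
    _ = ∫⁻ x, ENNReal.ofReal (f x) ∂μ :=
        lintegral_congr_ae (hf.mono fun _ hx => Real.enorm_of_nonneg hx)

theorem setLIntegral_setLIntegral_sub_eq {G : Type*} [MeasurableSpace G] [AddCommGroup G]
    [MeasurableAdd₂ G] {μ : Measure G} [SFinite μ] [μ.IsAddLeftInvariant] {ψ : G → ℝ≥0∞}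
    (hψ : Measurable ψ) (s : Set G) {t : Set G} (ht : MeasurableSet t) :
    ∫⁻ w in s, ∫⁻ z in t, ψ (z - w) ∂μ ∂μ = ∫⁻ u, ψ u * μ ((· + u) ⁻¹' t ∩ s) ∂μ := by
  have h_translate : ∀ w, ∫⁻ z in t, ψ (z - w) ∂μ = ∫⁻ u, t.indicator 1 (w + u) * ψ u ∂μ := by
    intro w
    rw [← lintegral_indicator ht, ← lintegral_add_left_eq_self _ w]
    refine lintegral_congr fun u => ?_
    by_cases hu : w + u ∈ t <;> simp [hu]
  have hF : Measurable (Function.uncurry fun w u => t.indicator 1 (w + u) * ψ u) :=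
    ((measurable_one.indicator ht).comp (measurable_fst.add measurable_snd)).mul
      (hψ.comp measurable_snd)
  simp_rw [h_translate]
  rw [lintegral_lintegral_swap hF.aemeasurable]
  refine lintegral_congr fun u => ?_
  have hpre : MeasurableSet ((· + u) ⁻¹' t) := measurable_add_const u ht
  simp_rw [mul_comm _ (ψ u)]
  rw [lintegral_const_mul (ψ u) (f := fun w => t.indicator 1 (w + u))
    ((measurable_one.indicator ht).comp (measurable_add_const u)),
    ← Measure.restrict_apply hpre, ← lintegral_indicator_one hpre]
  rfl

theorem measure_preimage_add_compl_inter_le {G : Type*} [MeasurableSpace G] [AddGroup G]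
    [MeasurableAdd G] {μ : Measure G} [μ.IsAddRightInvariant] {E : Set G} (hE : MeasurableSet E)
    (hμE : μ E ≠ ∞) (u : G) :
    μ ((· + u) ⁻¹' Eᶜ ∩ E) ≤ ENNReal.ofReal (∫ w,
      |E.indicator (fun _ => (1 : ℝ)) (w + u) - E.indicator (fun _ => (1 : ℝ)) w| ∂μ) := by
  have hind : Integrable (E.indicator fun _ => (1 : ℝ)) μ :=
    (integrable_indicator_iff hE).2 (integrableOn_const hμE)
  have hdiff : Integrable (fun w =>
      |E.indicator (fun _ => (1 : ℝ)) (w + u) - E.indicator (fun _ => (1 : ℝ)) w|) μ :=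
    ((hind.comp_add_right u).sub hind).abs
  rw [ofReal_integral_eq_lintegral_ofReal hdiff
      (Filter.Eventually.of_forall fun _ => abs_nonneg _),
    ← lintegral_indicator_one ((measurable_add_const u) hE.compl |>.inter hE)]
  refine lintegral_mono fun w => ?_
  by_cases hw : w ∈ E <;> by_cases hwu : w + u ∈ E <;> simp [hw, hwu]

theorem integrable_exp_neg_mul_sq_norm {V : Type*} [NormedAddCommGroup V] [InnerProductSpace ℝ V]
    [FiniteDimensional ℝ V] [MeasurableSpace V] [BorelSpace V] {b : ℝ} (hb : 0 < b) :
    Integrable fun v : V => Real.exp (-b * ‖v‖ ^ 2) := by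
  have h := (GaussianFourier.integrable_cexp_neg_mul_sq_norm_add
    (b := (b : ℂ)) (by simpa using hb) 0 (0 : V)).norm
  simp only [zero_mul, add_zero, Complex.norm_exp,
    ← Complex.ofReal_pow, ← Complex.ofReal_neg, ← Complex.ofReal_mul, Complex.ofReal_re] at h
  simpa using h

theorem lintegral_ofReal_exp_neg_mul_sq_norm {V : Type*} [NormedAddCommGroup V]
    [InnerProductSpace ℝ V] [FiniteDimensional ℝ V] [MeasurableSpace V] [BorelSpace V]
    {b : ℝ} (hb : 0 < b) :
    ∫⁻ v : V, ENNReal.ofReal (Real.exp (-b * ‖v‖ ^ 2)) =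
      ENNReal.ofReal ((Real.pi / b) ^ (Module.finrank ℝ V / 2 : ℝ)) := by
  rw [← ofReal_integral_eq_lintegral_ofReal (integrable_exp_neg_mul_sq_norm hb)
    (Filter.Eventually.of_forall fun _ => (Real.exp_pos _).le),
    GaussianFourier.integral_rexp_neg_mul_sq_norm hb]

theorem mul_exp_neg_sq_le (x : ℝ) : x * Real.exp (-x ^ 2) ≤ Real.exp (-(1 / 2) * x ^ 2) :=
  calc x * Real.exp (-x ^ 2) ≤ Real.exp (x ^ 2 / 2) * Real.exp (-x ^ 2) := by
        gcongr
        nlinarith [Real.add_one_le_exp (x ^ 2 / 2), sq_nonneg (x - 1)]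
    _ = Real.exp (-(1 / 2) * x ^ 2) := by rw [← Real.exp_add]; ring_nf

theorem norm_ginibre_sq (z w : ℂ) : ‖Ginibre z w‖ ^ 2 = Real.exp (-‖z - w‖ ^ 2) := by
  rw [Ginibre, Complex.norm_exp, sq, ← Real.exp_add]
  congr 1
  simp only [Complex.sub_re, Complex.div_re, Complex.ofReal_re, Complex.ofReal_im]
  rw [Complex.sq_norm, Complex.sq_norm, Complex.sq_norm, Complex.normSq_sub]
  norm_num
  ring

instance : SFinite dA := by unfold dA; infer_instance
instance : dA.IsAddLeftInvariant := by unfold dA; infer_instance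
instance : IsFiniteMeasureOnCompacts dA :=
  IsFiniteMeasureOnCompacts.smul _ (ENNReal.inv_ne_top.2 (ENNReal.ofReal_pos.2 Real.pi_pos).ne')

theorem lintegral_dA_ofReal_exp_neg_half_sq_norm :
    ∫⁻ u, ENNReal.ofReal (Real.exp (-(1 / 2) * ‖u‖ ^ 2)) ∂dA = 2 := by
  rw [dA, lintegral_smul_measure, lintegral_ofReal_exp_neg_mul_sq_norm one_half_pos,
    Complex.finrank_real_complex]
  have hpow : (Real.pi / (1 / 2)) ^ ((2 : ℕ) / 2 : ℝ) = Real.pi * 2 := by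
    norm_num [div_div_eq_mul_div]
  rw [hpow, smul_eq_mul, ← ENNReal.ofReal_inv_of_pos Real.pi_pos,
    ← ENNReal.ofReal_mul (inv_nonneg.2 Real.pi_pos.le), inv_mul_cancel_left₀ Real.pi_ne_zero,
    ENNReal.ofReal_ofNat]

theorem integral_integral_norm_ginibre_sq_le {E : Set ℂ} (hE : MeasurableSet E)
    (hEb : Bornology.IsBounded E) {P : ℝ} (hP : P ∈ perimBounds E) :
    ∫ w in E, ∫ z in Eᶜ, ‖Ginibre z w‖ ^ 2 ∂dA ∂dA ≤ 2 * P := by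
  obtain ⟨hP0, hPE⟩ := hP
  have hψ : Measurable fun u : ℂ => ENNReal.ofReal (Real.exp (-‖u‖ ^ 2)) := by fun_prop
  rw [← ENNReal.ofReal_le_ofReal_iff (by positivity)]
  calc ENNReal.ofReal (∫ w in E, ∫ z in Eᶜ, ‖Ginibre z w‖ ^ 2 ∂dA ∂dA)
      ≤ ∫⁻ w in E, ∫⁻ z in Eᶜ, ENNReal.ofReal (‖Ginibre z w‖ ^ 2) ∂dA ∂dA :=
        (ofReal_integral_le_lintegral_ofReal (Filter.Eventually.of_forall fun _ =>
          integral_nonneg fun _ => sq_nonneg _)).trans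
          (lintegral_mono fun _ => ofReal_integral_le_lintegral_ofReal
            (Filter.Eventually.of_forall fun _ => sq_nonneg _))
    _ = ∫⁻ u, ENNReal.ofReal (Real.exp (-‖u‖ ^ 2)) * dA ((· + u) ⁻¹' Eᶜ ∩ E) ∂dA := by
        simp_rw [norm_ginibre_sq]
        exact setLIntegral_setLIntegral_sub_eq hψ E hE.compl
    _ ≤ ∫⁻ u, ENNReal.ofReal (Real.exp (-‖u‖ ^ 2)) * ENNReal.ofReal (P * ‖u‖) ∂dA := by
        gcongr with u
        exact (measure_preimage_add_compl_inter_le hE hEb.measure_lt_top.ne u).trans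
          (ENNReal.ofReal_le_ofReal (hPE u))
    _ ≤ ∫⁻ u, ENNReal.ofReal P * ENNReal.ofReal (Real.exp (-(1 / 2) * ‖u‖ ^ 2)) ∂dA := by
        refine lintegral_mono fun u => ?_
        rw [← ENNReal.ofReal_mul (Real.exp_pos _).le, ← ENNReal.ofReal_mul hP0]
        refine ENNReal.ofReal_le_ofReal ?_
        linarith [mul_le_mul_of_nonneg_left (mul_exp_neg_sq_le ‖u‖) hP0]
    _ = ENNReal.ofReal (2 * P) := by
        rw [lintegral_const_mul' _ _ ENNReal.ofReal_ne_top,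
          lintegral_dA_ofReal_exp_neg_half_sq_norm, ENNReal.ofReal_mul zero_le_two,
          ENNReal.ofReal_ofNat, mul_comm]

/-- Area law for the Ginibre kernel:
`∫_E ∫_{ℂ∖E} |G(z,w)|² dA(z) dA(w) ≤ C · perim E`. -/
theorem ginibre_area_law :
    ∃ C > (0 : ℝ), ∀ E : Set ℂ, MeasurableSet E → Bornology.IsBounded E →
      HasFinitePerim E →
      ∫ w in E, ∫ z in Eᶜ, ‖Ginibre z w‖ ^ 2 ∂dA ∂dA ≤ C * perim E := by
  refine ⟨2, two_pos, fun E hE hEb hperim => ?_⟩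
  refine (div_le_iff₀' two_pos).1 (le_csInf hperim fun P hP => ?_)
  exact (div_le_iff₀' two_pos).2 (integral_integral_norm_ginibre_sq_le hE hEb hP)
end

section
/- Let $T$ be a positive self-adjoint operator on a finite-dimensional inner product space with eigenvalues $1 \ge \lambda_1 \ge \cdots \ge \lambda_n > 0$ (so $0 \le T \le I$). Fix $\vartheta \in (0,1)$. Then $|\#\{j : \lambda_j \ge \vartheta\} - \operatorname{trace} T| \le \max\{\frac{1}{\vartheta}, \frac{1}{1-\vartheta}\} \cdot [\operatorname{trace} T - \operatorname{trace} T^2]$. -/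
open scoped BigOperators

/-- Landau's eigenvalue-counting estimate: if `T` is a positive self-adjoint
contraction on an `n`-dimensional complex inner product space, with eigenvalues
`1 ≥ λ₁ ≥ ⋯ ≥ λₙ > 0` (realized by an orthonormal eigenbasis `b`), then for
`ϑ ∈ (0,1)`,
`|#{j : λⱼ ≥ ϑ} - trace T| ≤ max (1/ϑ) (1/(1-ϑ)) · (trace T - trace T²)`,
where `trace T = ∑ λⱼ` and `trace T² = ∑ λⱼ²`. -/
theorem eigenvalue_counting
    {E : Type*} [NormedAddCommGroup E] [InnerProductSpace ℂ E] [FiniteDimensional ℂ E]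
    (n : ℕ) (T : E →ₗ[ℂ] E) (b : OrthonormalBasis (Fin n) ℂ E)
    (lam : Fin n → ℝ)
    (heig : ∀ j, T (b j) = (lam j : ℂ) • b j)
    (hmono : Antitone lam)
    (h0 : ∀ j, 0 < lam j) (h1 : ∀ j, lam j ≤ 1)
    (ϑ : ℝ) (hϑ0 : 0 < ϑ) (hϑ1 : ϑ < 1) :
    |((Finset.univ.filter fun j => ϑ ≤ lam j).card : ℝ) - ∑ j, lam j| ≤
      max (1 / ϑ) (1 / (1 - ϑ)) * (∑ j, lam j - ∑ j, (lam j) ^ 2) := by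
  set M := max (1 / ϑ) (1 / (1 - ϑ)) with hM
  have hϑ1' : 0 < 1 - ϑ := by linarith
  have hM1 : 1 / ϑ ≤ M := le_max_left _ _
  have hM2 : 1 / (1 - ϑ) ≤ M := le_max_right _ _
  have hMpos : 0 < M := lt_of_lt_of_le (by positivity) hM1
  have key : ∀ j, |(if ϑ ≤ lam j then (1 : ℝ) else 0) - lam j| ≤ M * (lam j - lam j ^ 2) := by
    intro j
    have h0j := h0 j
    have h1j := h1 j
    by_cases h : ϑ ≤ lam j
    · rw [if_pos h, abs_of_nonneg (by linarith)]
      have h1ϑ : 1 ≤ M * ϑ := by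
        rw [div_le_iff₀ hϑ0] at hM1; linarith
      nlinarith [mul_nonneg hMpos.le (sub_nonneg.2 h)]
    · push_neg at h
      rw [if_neg (not_le.2 h), abs_of_nonpos (by linarith)]
      have h1ϑ : 1 ≤ M * (1 - ϑ) := by
        rw [div_le_iff₀ hϑ1'] at hM2; linarith
      nlinarith [mul_nonneg hMpos.le (sub_nonneg.2 h.le)]
  have hcard : ((Finset.univ.filter fun j => ϑ ≤ lam j).card : ℝ)
      = ∑ j, (if ϑ ≤ lam j then (1 : ℝ) else 0) := by
    rw [Finset.card_filter]
    push_cast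
    rfl
  calc |((Finset.univ.filter fun j => ϑ ≤ lam j).card : ℝ) - ∑ j, lam j|
      = |∑ j, ((if ϑ ≤ lam j then (1 : ℝ) else 0) - lam j)| := by
        rw [hcard, Finset.sum_sub_distrib]
    _ ≤ ∑ j, |(if ϑ ≤ lam j then (1 : ℝ) else 0) - lam j| :=
        Finset.abs_sum_le_sum_abs _ _
    _ ≤ ∑ j, M * (lam j - lam j ^ 2) := Finset.sum_le_sum fun j _ => key j
    _ = M * (∑ j, lam j - ∑ j, (lam j) ^ 2) := by
        rw [← Finset.mul_sum, Finset.sum_sub_distrib]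
end
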